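/- Let N ≥ 2, δ = 1, k_n = ⌊K n log n⌋, and let the connection rates satisfy c_{k_n} = C + a log n · N^{b log n} with C ≥ 0, a > 0, b > 0 and c_{k_n} ≤ c_j ≤ c_{k_{n+1}} whenever k_n < j < k_{n+1}, where 2/log N < K < b and additionally b < 2K − 1/log N. Then almost surely there exists a (random) number n_0 such that for all n ≥ n_0, edges of G_N between X_{k_n} ∩ (B_{k_n} \ B_{k_{n−1}}) and X_{k_{n+ℓ}} ∩ (B_{k_{n+ℓ}} \ B_{k_{n+ℓ−1}}) occur only for ℓ = 1 or ℓ = 2; that is, the percolation cluster is given by a cascade of clusters at the distances k_n. -/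

import Mathlib

open MeasureTheory ProbabilityTheory Filter

/-- The hierarchical group of order `N`: sequences with values in `{0, ..., N-1}`
(encoded as `ZMod N`), all but finitely many entries zero, with componentwise
addition mod `N`. -/
abbrev HierGroup (N : ℕ) := ℕ →₀ ZMod N

/-- The hierarchical distance: `0` if `x = y`, and otherwise the largest index
(counted starting from `1`) where `x` and `y` differ. -/
noncomputable def hdist {N : ℕ} (x y : HierGroup N) : ℕ :=
  (x - y).support.sup fun i => i + 1

lemma hdist_comm {N : ℕ} (x y : HierGroup N) : hdist x y = hdist y x := by
  unfold hdist
  rw [← neg_sub y x, Finsupp.support_neg]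

/-- The random graph determined by an edge configuration `ω`:
`x` and `y` are adjacent iff they are distinct and the edge `s(x,y)` is open. -/
def graphOf {V : Type*} {Ω : Type*} (E : Sym2 V → Ω → Bool) (ω : Ω) : SimpleGraph V where
  Adj x y := x ≠ y ∧ E s(x, y) ω = true
  symm := ⟨by
    intro x y h
    refine ⟨h.1.symm, ?_⟩
    rw [Sym2.eq_swap]
    exact h.2⟩
  loopless := ⟨fun x h => h.1 rfl⟩

/-- `x` lies in an infinite cluster (connected component) of `G`. -/
def InInfiniteCluster {V : Type*} (G : SimpleGraph V) (x : V) : Prop :=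
  {y | G.Reachable x y}.Infinite

/-- `G` has exactly one infinite connected component. -/
def UniqueInfiniteCluster {V : Type*} (G : SimpleGraph V) : Prop :=
  ∃! S : Set V, (∃ x, S = {y | G.Reachable x y}) ∧ S.Infinite

/-- The edge probabilities of the hierarchical random graph `G_N`: two distinct
points at hierarchical distance `k` are joined with probability
`min (c k / N ^ (k * (1 + δ))) 1`. -/
def EdgeProbOK (N : ℕ) (δ : ℝ) (c : ℕ → ℝ) {Ω : Type*} [MeasurableSpace Ω]
    (μ : Measure Ω) (E : Sym2 (HierGroup N) → Ω → Bool) : Prop :=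
  ∀ x y : HierGroup N, x ≠ y →
    μ {ω | E s(x, y) ω = true} =
      ENNReal.ofReal (min (c (hdist x y) / (N : ℝ) ^ ((hdist x y : ℝ) * (1 + δ))) 1)

/-- The `k`-ball containing `0` in the hierarchical group. -/
def hball (N : ℕ) (k : ℕ) : Set (HierGroup N) := {y | hdist 0 y ≤ k}

/-- The `(j, l]`-annulus around `0` in the hierarchical group. -/
def hannulus (N : ℕ) (j l : ℕ) : Set (HierGroup N) :=
  {y | j < hdist 0 y ∧ hdist 0 y ≤ l}

/-- The restriction of a graph to a set `S` of vertices: only edges with both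
endpoints in `S` are kept. -/
def restrictTo {V : Type*} (G : SimpleGraph V) (S : Set V) : SimpleGraph V where
  Adj a b := G.Adj a b ∧ a ∈ S ∧ b ∈ S
  symm := ⟨fun a b h => ⟨h.1.symm, h.2.2, h.2.1⟩⟩
  loopless := ⟨fun a h => G.loopless.irrefl a h.1⟩

/-- The cluster of `x` inside the `k`-ball `B_k` containing `0`, using only
edges between points of `B_k`. -/
def clusterIn (N : ℕ) (G : SimpleGraph (HierGroup N)) (k : ℕ) (x : HierGroup N) :
    Set (HierGroup N) :=
  {y | (restrictTo G (hball N k)).Reachable x y}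

/-- `S` is a largest cluster of the ball `B_k` containing `0` (in the graph `G`
restricted to `B_k`). -/
def IsLargestCluster (N : ℕ) (G : SimpleGraph (HierGroup N)) (k : ℕ)
    (S : Set (HierGroup N)) : Prop :=
  (∃ x ∈ hball N k, S = clusterIn N G k x) ∧
    ∀ x ∈ hball N k, (clusterIn N G k x).ncard ≤ S.ncard

/-- The hierarchical scales `k_n = ⌊K n log n⌋`. -/
noncomputable def kseq (K : ℝ) (n : ℕ) : ℕ := ⌊K * n * Real.log n⌋₊

/-!
Almost surely, for all large `n` no edge at all joins `B_{k_n}` to the complement of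
`B_{k_{n+2}}`; this rules out the edges with `ℓ ≥ 3`, whatever the clusters are.
By the first Borel–Cantelli lemma it suffices that the expected numbers of such edges are
summable. Split the complement into the annuli `(k_m, k_{m+1}]`, `m ≥ n + 2`. On such an
annulus the rate is at most `c_{k_{m+1}} ≈ a log m · m ^ (b log N)`, while the ball has
`N ^ {k_n}` points and the annulus weighs `≈ N ^ {-k_m}`, and
`N ^ {k_n - k_m} ≤ N · m ^ {-K log N (m - n)}`. The sum over `m` is dominated by `m = n + 2`
and is `O(n ^ {b log N + ε - 2 K log N})`, which is summable because `b < 2K - 1/log N`.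
-/

open scoped ENNReal

section HierarchicalGroup

variable {N : ℕ}

lemma hdist_le_iff {x y : HierGroup N} {k : ℕ} :
    hdist x y ≤ k ↔ ∀ i, k ≤ i → x i = y i := by
  simp only [hdist, Finset.sup_le_iff, Finsupp.mem_support_iff, Finsupp.sub_apply, ne_eq,
    sub_eq_zero]
  exact ⟨fun h i hi => by_contra fun hne => by have := h i hne; omega,
    fun h i hi => by_contra fun hc => hi (h i (by omega))⟩

lemma hdist_zero_le_iff {y : HierGroup N} {k : ℕ} :
    hdist 0 y ≤ k ↔ ∀ i, k ≤ i → y i = 0 := by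
  simp only [hdist_le_iff, Finsupp.coe_zero, Pi.zero_apply, eq_comm]

lemma hdist_eq_of_hdist_zero_lt {x y : HierGroup N} (h : hdist 0 x < hdist 0 y) :
    hdist x y = hdist 0 y := by
  have hx := hdist_zero_le_iff.1 (le_refl (hdist 0 x))
  have hy := hdist_zero_le_iff.1 (le_refl (hdist 0 y))
  refine le_antisymm (hdist_le_iff.2 fun i hi => by rw [hx i (by omega), hy i hi]) ?_
  by_contra! hlt
  have hxy := hdist_le_iff.1 (by omega : hdist x y ≤ hdist 0 y - 1)
  have : hdist 0 y ≤ hdist 0 y - 1 := hdist_zero_le_iff.2 fun i hi => by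
    rcases hi.eq_or_lt with rfl | hi
    · rw [← hxy _ le_rfl, hx _ (by omega)]
    · exact hy i (by omega)
  omega

lemma injOn_hball (k : ℕ) : Set.InjOn (fun (y : HierGroup N) (i : Fin k) => y i) (hball N k) := by
  intro y hy z hz hyz
  ext i
  rcases lt_or_ge i k with hik | hik
  · exact congrFun hyz ⟨i, hik⟩
  · rw [hdist_zero_le_iff.1 hy i hik, hdist_zero_le_iff.1 hz i hik]

lemma encard_hball_le [NeZero N] (k : ℕ) : (hball N k).encard ≤ N ^ k := by
  rw [← (injOn_hball k).encard_image]
  refine (Set.encard_le_encard (Set.subset_univ _)).trans_eq ?_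
  simp [ENat.card_eq_coe_fintype_card, ZMod.card]

lemma sum_Ioc_inv_pow_le (hN : 2 ≤ N) (k l : ℕ) :
    ∑ i ∈ Finset.Ioc k l, ((N : ℝ≥0∞)⁻¹) ^ i ≤ ((N : ℝ≥0∞)⁻¹) ^ k := by
  have hN' : (2 : ℝ) ≤ N := by exact_mod_cast hN
  have hinv : (N : ℝ≥0∞)⁻¹ = ENNReal.ofReal (N : ℝ)⁻¹ := by
    rw [ENNReal.ofReal_inv_of_pos (by linarith), ENNReal.ofReal_natCast]
  have hx : (N : ℝ)⁻¹ ≤ 1 / 2 := by rw [one_div]; gcongr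
  simp only [hinv, ← ENNReal.ofReal_pow (inv_nonneg.2 (Nat.cast_nonneg N))]
  rw [← ENNReal.ofReal_sum_of_nonneg fun i _ => by positivity]
  refine ENNReal.ofReal_le_ofReal ?_
  rw [← Finset.Ico_add_one_add_one_eq_Ioc]
  refine (geom_sum_Ico_le_of_lt_one (by positivity) (by linarith)).trans ?_
  rw [div_le_iff₀ (by linarith), pow_succ]
  gcongr
  linarith

/-- At most `N ^ i` points lie at distance `i` from `0`, so the sum is a geometric tail. -/
lemma tsum_hannulus_inv_pow_le (hN : 2 ≤ N) (k l : ℕ) :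
    ∑' y : hannulus N k l, ((N : ℝ≥0∞) ^ (2 * hdist 0 (y : HierGroup N)))⁻¹ ≤
      ((N : ℝ≥0∞) ^ k)⁻¹ := by
  have : NeZero N := ⟨by omega⟩
  have hU : hannulus N k l = ⋃ i ∈ Finset.Ioc k l, {y | hdist 0 y = i} := by
    ext y; simp [hannulus]
  have hsphere (i : ℕ) : ∑' y : {y : HierGroup N | hdist 0 y = i},
      ((N : ℝ≥0∞) ^ (2 * hdist 0 (y : HierGroup N)))⁻¹ ≤ (N : ℝ≥0∞)⁻¹ ^ i := by
    calc _ = ∑' _ : {y : HierGroup N | hdist 0 y = i}, ((N : ℝ≥0∞) ^ (2 * i))⁻¹ :=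
          tsum_congr fun y => by rw [y.2]
      _ ≤ (N : ℝ≥0∞) ^ i * ((N : ℝ≥0∞) ^ (2 * i))⁻¹ := by
          rw [ENNReal.tsum_set_const]
          gcongr
          have := (Set.encard_le_encard fun y (hy : hdist 0 y = i) => hy.le).trans
            (encard_hball_le (N := N) i)
          exact_mod_cast ENat.toENNReal_le.2 this
      _ = (N : ℝ≥0∞)⁻¹ ^ i := by
          rw [two_mul, pow_add, ENNReal.mul_inv (by simp) (by simp), ← mul_assoc,
            ENNReal.mul_inv_cancel (by simp [NeZero.ne]) (by simp), one_mul, ENNReal.inv_pow]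
  rw [hU]
  exact (ENNReal.tsum_biUnion_le (fun y => ((N : ℝ≥0∞) ^ (2 * hdist 0 y))⁻¹) _ _).trans
    ((Finset.sum_le_sum fun i _ => hsphere i).trans
      ((sum_Ioc_inv_pow_le hN k l).trans_eq ENNReal.inv_pow.symm))

lemma compl_hball_subset_iUnion_hannulus {s : ℕ → ℕ} (hs : Tendsto s atTop atTop) (n : ℕ) :
    (hball N (s n))ᶜ ⊆ ⋃ i, hannulus N (s (n + i)) (s (n + i + 1)) := by
  classical
  intro y hy
  have hex : ∃ i, hdist 0 y ≤ s (n + i) := by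
    obtain ⟨m, hym, hnm⟩ :=
      ((tendsto_atTop.1 hs (hdist 0 y)).and (eventually_ge_atTop n)).exists
    exact ⟨m - n, by rwa [Nat.add_sub_cancel' hnm]⟩
  have hpos : Nat.find hex ≠ 0 := fun h0 =>
    hy (show hdist 0 y ≤ s n by simpa [h0] using Nat.find_spec hex)
  refine Set.mem_iUnion.2 ⟨Nat.find hex - 1, not_le.1 (Nat.find_min hex (by omega)), ?_⟩
  simpa [Nat.sub_add_cancel (Nat.pos_of_ne_zero hpos), add_assoc] using Nat.find_spec hex

end HierarchicalGroup

section EdgeEvents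

variable {V Ω : Type*}

def edgeEvent (E : Sym2 V → Ω → Bool) (S T : Set V) : Set Ω :=
  {ω | ∃ x ∈ S, ∃ y ∈ T, E s(x, y) ω = true}

lemma edgeEvent_subset_iUnion {ι : Type*} {E : Sym2 V → Ω → Bool} {S T : Set V}
    {T' : ι → Set V} (hT : T ⊆ ⋃ i, T' i) :
    edgeEvent E S T ⊆ ⋃ i, edgeEvent E S (T' i) := by
  rintro ω ⟨x, hx, y, hy, hxy⟩
  obtain ⟨i, hi⟩ := Set.mem_iUnion.1 (hT hy)
  exact Set.mem_iUnion.2 ⟨i, x, hx, y, hi, hxy⟩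

lemma measure_edgeEvent_le [Countable V] [MeasurableSpace Ω] (μ : Measure Ω)
    (E : Sym2 V → Ω → Bool) (S T : Set V) :
    μ (edgeEvent E S T) ≤ ∑' (x : S) (y : T), μ {ω | E s((x : V), (y : V)) ω = true} := by
  have : edgeEvent E S T = ⋃ (x : S) (y : T), {ω | E s((x : V), (y : V)) ω = true} := by
    ext; simp [edgeEvent]
  rw [this]
  exact (measure_iUnion_le _).trans (ENNReal.tsum_le_tsum fun x => measure_iUnion_le _)

end EdgeEvents

section Scales

variable {K : ℝ}

lemma kseq_mono (hK : 0 ≤ K) : Monotone (kseq K) := fun n m h =>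
  Nat.floor_mono (by
    have hlog : Real.log n ≤ Real.log m := by
      rcases n.eq_zero_or_pos with rfl | hn
      · simpa using Real.log_natCast_nonneg m
      · exact Real.log_le_log (by exact_mod_cast hn) (by exact_mod_cast h)
    have : (n : ℝ) ≤ m := by exact_mod_cast h
    rw [mul_assoc, mul_assoc]
    gcongr)

lemma tendsto_kseq_atTop (hK : 0 < K) : Tendsto (kseq K) atTop atTop :=
  tendsto_nat_floor_atTop.comp <|
    ((tendsto_natCast_atTop_atTop.const_mul_atTop hK).atTop_mul_atTop₀
      (Real.tendsto_log_atTop.comp tendsto_natCast_atTop_atTop))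

/-- The factor `N` absorbs the rounding in `k_m = ⌊K m log m⌋`; otherwise this is
`n log n ≤ n log m`. -/
lemma rpow_kseq_sub_kseq_le {N : ℕ} (hN : 1 ≤ N) (hK : 0 ≤ K) {n m : ℕ} (hnm : n ≤ m)
    (hm : 0 < m) :
    (N : ℝ) ^ ((kseq K n : ℝ) - kseq K m) ≤
      N * (m : ℝ) ^ (-(K * Real.log N) * ((m : ℝ) - n)) := by
  have hN0 : (0 : ℝ) < N := by exact_mod_cast hN
  have hlogN : 0 ≤ Real.log N := Real.log_natCast_nonneg N
  have hn : (kseq K n : ℝ) ≤ K * n * Real.log n := Nat.floor_le (by positivity)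
  have hm' : K * m * Real.log m < kseq K m + 1 := Nat.lt_floor_add_one _
  have hlog : (n : ℝ) * Real.log n ≤ n * Real.log m := by
    rcases n.eq_zero_or_pos with rfl | hn0
    · simp
    · gcongr
  have hexp : ((kseq K n : ℝ) - kseq K m) * Real.log N ≤
      Real.log N + Real.log m * (-(K * Real.log N) * ((m : ℝ) - n)) := by
    have : (kseq K n : ℝ) - kseq K m ≤ 1 - K * ((m : ℝ) - n) * Real.log m := by
      linarith [mul_le_mul_of_nonneg_left hlog hK]
    linarith [mul_le_mul_of_nonneg_right this hlogN]
  rw [Real.rpow_def_of_pos hN0, Real.rpow_def_of_pos (by exact_mod_cast hm)]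
  calc Real.exp (Real.log N * ((kseq K n : ℝ) - kseq K m))
      ≤ Real.exp (Real.log N + Real.log m * (-(K * Real.log N) * ((m : ℝ) - n))) := by
        rw [mul_comm]; exact Real.exp_le_exp.2 hexp
    _ = N * Real.exp (Real.log m * (-(K * Real.log N) * ((m : ℝ) - n))) := by
        rw [Real.exp_add, Real.exp_log hN0]

end Scales

section Rates

variable {N : ℕ} {K C a b ε : ℝ}

/-- `N ^ (b log t) = t ^ (b log N)`, and `log t ≤ t ^ ε / ε`. -/
lemma rate_le_rpow (hN : 0 < N) (hC : 0 ≤ C) (ha : 0 ≤ a) (hε : 0 < ε)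
    (hβε : 0 ≤ b * Real.log N + ε) {t : ℝ} (ht : 1 ≤ t) :
    C + a * Real.log t * (N : ℝ) ^ (b * Real.log t) ≤
      (C + a / ε) * t ^ (b * Real.log N + ε) := by
  have ht0 : 0 < t := by linarith
  have hswap : (N : ℝ) ^ (b * Real.log t) = t ^ (b * Real.log N) := by
    rw [Real.rpow_def_of_pos (by exact_mod_cast hN), Real.rpow_def_of_pos ht0]
    ring_nf
  have hlog : a * Real.log t ≤ a / ε * t ^ ε := by
    rw [div_mul_eq_mul_div, mul_div_assoc]
    exact mul_le_mul_of_nonneg_left (Real.log_le_rpow_div ht0.le hε) ha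
  have hC' : C ≤ C * t ^ (b * Real.log N + ε) :=
    le_mul_of_one_le_right hC (Real.one_le_rpow ht hβε)
  calc C + a * Real.log t * (N : ℝ) ^ (b * Real.log t)
      ≤ C * t ^ (b * Real.log N + ε) + a / ε * t ^ ε * t ^ (b * Real.log N) := by
        rw [hswap]; gcongr
    _ = (C + a / ε) * t ^ (b * Real.log N + ε) := by
        rw [mul_assoc, ← Real.rpow_add ht0]; ring_nf

/-- The contribution of the annulus `(k_m, k_{m+1}]`, `m = n + 2 + i`, to edges leaving `B_{k_n}`:
two factors `m ^ (-K log N)` beat the growth `m ^ (b log N + ε)` of the rate, and every further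
one gives a factor `1/2`. -/
lemma rpow_kseq_mul_rate_le (hN : 2 ≤ N) (hK : 0 ≤ K) (hκ : 1 ≤ K * Real.log N)
    (hC : 0 ≤ C) (ha : 0 ≤ a) (hε : 0 < ε) (hβε : 0 ≤ b * Real.log N + ε)
    (hβεκ : b * Real.log N + ε ≤ 2 * (K * Real.log N)) (n i : ℕ) :
    (N : ℝ) ^ ((kseq K n : ℝ) - kseq K (n + 2 + i)) *
        (C + a * Real.log ((n + 2 + i + 1 : ℕ) : ℝ) *
          (N : ℝ) ^ (b * Real.log ((n + 2 + i + 1 : ℕ) : ℝ))) ≤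
      N * (C + a / ε) * 2 ^ (b * Real.log N + ε) *
        ((n : ℝ) + 1) ^ (b * Real.log N + ε - 2 * (K * Real.log N)) * (1 / 2) ^ i := by
  set κ := K * Real.log N
  set β := b * Real.log N
  set m := n + 2 + i with hm
  have hm2 : (2 : ℝ) ≤ m := by exact_mod_cast (by omega : 2 ≤ m)
  have hm0 : (0 : ℝ) < m := by linarith
  have hnm : (n : ℝ) + 1 ≤ m := by exact_mod_cast (by omega : n + 1 ≤ m)
  have hdecay : (N : ℝ) ^ ((kseq K n : ℝ) - kseq K m) ≤
      N * ((m : ℝ) ^ (-(2 * κ)) * (1 / 2) ^ i) := by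
    have hsplit : (m : ℝ) ^ (-κ * ((m : ℝ) - n)) =
        (m : ℝ) ^ (-(2 * κ)) * ((m : ℝ) ^ (-κ)) ^ i := by
      rw [← Real.rpow_natCast, ← Real.rpow_mul hm0.le, ← Real.rpow_add hm0, hm]
      push_cast; ring_nf
    have hhalf : (m : ℝ) ^ (-κ) ≤ 1 / 2 := by
      calc (m : ℝ) ^ (-κ) ≤ (m : ℝ) ^ (-1 : ℝ) :=
            Real.rpow_le_rpow_of_exponent_le (by linarith) (by linarith)
        _ ≤ 1 / 2 := by rw [Real.rpow_neg_one, one_div]; gcongr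
    refine (rpow_kseq_sub_kseq_le (by omega) hK (by omega) (by exact_mod_cast hm0)).trans ?_
    rw [hsplit]
    gcongr
  have hrate :
      C + a * Real.log ((m + 1 : ℕ) : ℝ) * (N : ℝ) ^ (b * Real.log ((m + 1 : ℕ) : ℝ)) ≤
        (C + a / ε) * 2 ^ (β + ε) * (m : ℝ) ^ (β + ε) := by
    refine (rate_le_rpow (by omega) hC ha hε hβε (by norm_cast; omega)).trans ?_
    rw [mul_assoc, ← Real.mul_rpow zero_le_two hm0.le]
    gcongr
    push_cast; linarith
  have hpoly :
      (m : ℝ) ^ (β + ε) * (m : ℝ) ^ (-(2 * κ)) ≤ ((n : ℝ) + 1) ^ (β + ε - 2 * κ) := by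
    rw [← Real.rpow_add hm0, ← sub_eq_add_neg]
    exact Real.rpow_le_rpow_of_nonpos (by positivity) (by linarith) (by linarith)
  calc _ ≤ N * ((m : ℝ) ^ (-(2 * κ)) * (1 / 2) ^ i) *
          ((C + a / ε) * 2 ^ (β + ε) * (m : ℝ) ^ (β + ε)) := by
        gcongr
    _ = N * (C + a / ε) * 2 ^ (β + ε) * ((m : ℝ) ^ (β + ε) * (m : ℝ) ^ (-(2 * κ))) *
          (1 / 2) ^ i := by ring
    _ ≤ _ := by gcongr

end Rates

section Cascade

variable {N : ℕ} {K C a b ε : ℝ} {c : ℕ → ℝ} {Ω : Type*} [MeasurableSpace Ω]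
  {μ : Measure Ω} {E : Sym2 (HierGroup N) → Ω → Bool}

/-- By the ultrametric property an edge from `B_j` to a point `y` of the annulus has length
`d(0, y)`, so its probability does not depend on the starting point. -/
lemma measure_edgeEvent_hball_hannulus_le (hN : 2 ≤ N) (hprob : EdgeProbOK N 1 c μ E)
    {j k l : ℕ} (hjk : j ≤ k) {A : ℝ} (hA : ∀ i, k < i → i ≤ l → c i ≤ A) :
    μ (edgeEvent E (hball N j) (hannulus N k l)) ≤
      N ^ j * (ENNReal.ofReal A * ((N : ℝ≥0∞) ^ k)⁻¹) := by
  have : NeZero N := ⟨by omega⟩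
  have hpair (x : hball N j) (y : hannulus N k l) :
      μ {ω | E s((x : HierGroup N), y) ω = true} ≤
        ENNReal.ofReal A * ((N : ℝ≥0∞) ^ (2 * hdist 0 (y : HierGroup N)))⁻¹ := by
    obtain ⟨x, hx : hdist 0 x ≤ j⟩ := x
    obtain ⟨y, hy⟩ := y
    have hlt : hdist 0 x < hdist 0 y := by have := hy.1; omega
    have hne : x ≠ y := by rintro rfl; exact hlt.false
    rw [hprob x y hne, hdist_eq_of_hdist_zero_lt hlt, ← ENNReal.ofReal_natCast,
      ← ENNReal.ofReal_pow (Nat.cast_nonneg N), ← ENNReal.ofReal_inv_of_pos (by positivity),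
      ← ENNReal.ofReal_mul' (by positivity)]
    refine ENNReal.ofReal_le_ofReal ((min_le_left _ _).trans ?_)
    rw [show (hdist 0 y : ℝ) * (1 + 1) = ((2 * hdist 0 y : ℕ) : ℝ) by push_cast; ring,
      Real.rpow_natCast, div_eq_mul_inv]
    gcongr
    exact hA _ hy.1 hy.2
  calc μ (edgeEvent E (hball N j) (hannulus N k l))
      ≤ ∑' (_ : hball N j), ENNReal.ofReal A * ((N : ℝ≥0∞) ^ k)⁻¹ := by
        refine (measure_edgeEvent_le μ E _ _).trans (ENNReal.tsum_le_tsum fun x => ?_)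
        refine (ENNReal.tsum_le_tsum (hpair x)).trans ?_
        rw [ENNReal.tsum_mul_left]
        gcongr
        exact tsum_hannulus_inv_pow_le hN k l
    _ ≤ N ^ j * (ENNReal.ofReal A * ((N : ℝ≥0∞) ^ k)⁻¹) := by
        rw [ENNReal.tsum_set_const]
        gcongr
        exact_mod_cast ENat.toENNReal_le.2 (encard_hball_le j)

lemma measure_edgeEvent_hball_hannulus_kseq_le (hN : 2 ≤ N) (hK : 0 ≤ K)
    (hmono : ∀ n : ℕ, 1 ≤ n → ∀ j : ℕ, kseq K n < j → j < kseq K (n + 1) →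
      c (kseq K n) ≤ c j ∧ c j ≤ c (kseq K (n + 1)))
    (hprob : EdgeProbOK N 1 c μ E) {n m : ℕ} (hm : 1 ≤ m) (hnm : n ≤ m) :
    μ (edgeEvent E (hball N (kseq K n)) (hannulus N (kseq K m) (kseq K (m + 1)))) ≤
      ENNReal.ofReal ((N : ℝ) ^ ((kseq K n : ℝ) - kseq K m) * c (kseq K (m + 1))) := by
  have hA (j : ℕ) (hj : kseq K m < j) (hj' : j ≤ kseq K (m + 1)) :
      c j ≤ c (kseq K (m + 1)) := by
    rcases hj'.eq_or_lt with rfl | hlt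
    · exact le_rfl
    · exact (hmono m hm j hj hlt).2
  refine (measure_edgeEvent_hball_hannulus_le hN hprob (kseq_mono hK hnm) hA).trans_eq ?_
  have hN0 : (0 : ℝ) < N := by exact_mod_cast (by omega : 0 < N)
  rw [Real.rpow_sub hN0, Real.rpow_natCast, Real.rpow_natCast,
    ENNReal.ofReal_mul (by positivity), ENNReal.ofReal_div_of_pos (by positivity),
    ENNReal.ofReal_pow hN0.le, ENNReal.ofReal_pow hN0.le, ENNReal.ofReal_natCast, div_eq_mul_inv]
  ring

lemma measure_edgeEvent_hball_compl_le (hN : 2 ≤ N) (hK : 0 < K) (hκ : 1 ≤ K * Real.log N)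
    (hC : 0 ≤ C) (ha : 0 ≤ a) (hε : 0 < ε) (hβε : 0 ≤ b * Real.log N + ε)
    (hβεκ : b * Real.log N + ε ≤ 2 * (K * Real.log N))
    (hck : ∀ n : ℕ, 1 ≤ n →
      c (kseq K n) = C + a * Real.log n * (N : ℝ) ^ (b * Real.log n))
    (hmono : ∀ n : ℕ, 1 ≤ n → ∀ j : ℕ, kseq K n < j → j < kseq K (n + 1) →
      c (kseq K n) ≤ c j ∧ c j ≤ c (kseq K (n + 1)))
    (hprob : EdgeProbOK N 1 c μ E) (n : ℕ) :
    μ (edgeEvent E (hball N (kseq K n)) (hball N (kseq K (n + 2)))ᶜ) ≤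
      ENNReal.ofReal (2 * (N * (C + a / ε) * 2 ^ (b * Real.log N + ε) *
        ((n : ℝ) + 1) ^ (b * Real.log N + ε - 2 * (K * Real.log N)))) := by
  set g := (N : ℝ) * (C + a / ε) * 2 ^ (b * Real.log N + ε) *
    ((n : ℝ) + 1) ^ (b * Real.log N + ε - 2 * (K * Real.log N))
  have hg : 0 ≤ g := by
    have : 0 ≤ C + a / ε := add_nonneg hC (div_nonneg ha hε.le)
    positivity
  have hterm (i : ℕ) : μ (edgeEvent E (hball N (kseq K n))
      (hannulus N (kseq K (n + 2 + i)) (kseq K (n + 2 + i + 1)))) ≤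
      ENNReal.ofReal (g * (1 / 2) ^ i) := by
    refine (measure_edgeEvent_hball_hannulus_kseq_le hN hK.le hmono hprob (by omega)
      (by omega)).trans (ENNReal.ofReal_le_ofReal ?_)
    rw [hck _ (by omega)]
    exact rpow_kseq_mul_rate_le hN hK.le hκ hC ha hε hβε hβεκ n i
  calc μ (edgeEvent E (hball N (kseq K n)) (hball N (kseq K (n + 2)))ᶜ)
      ≤ ∑' i, μ (edgeEvent E (hball N (kseq K n))
          (hannulus N (kseq K (n + 2 + i)) (kseq K (n + 2 + i + 1)))) :=
        (measure_mono (edgeEvent_subset_iUnion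
          (compl_hball_subset_iUnion_hannulus (tendsto_kseq_atTop hK) (n + 2)))).trans
          (measure_iUnion_le _)
    _ ≤ ∑' i : ℕ, ENNReal.ofReal (g * (1 / 2) ^ i) := ENNReal.tsum_le_tsum hterm
    _ = ENNReal.ofReal (2 * g) := by
        rw [← ENNReal.ofReal_tsum_of_nonneg (fun i => by positivity)
          (summable_geometric_two.mul_left g), tsum_mul_left, tsum_geometric_two, mul_comm]

end Cascade

theorem critical_cascade_of_clusters_general
    (N : ℕ) (hN : 2 ≤ N) (K b C a : ℝ)
    (hK : 2 / Real.log N < K) (hb2 : b < 2 * K - 1 / Real.log N)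
    (hC : 0 ≤ C) (ha : 0 < a) (hb : 0 < b)
    (c : ℕ → ℝ)
    (hck : ∀ n : ℕ, 1 ≤ n →
      c (kseq K n) = C + a * Real.log n * (N : ℝ) ^ (b * Real.log n))
    (hmono : ∀ n : ℕ, 1 ≤ n → ∀ j : ℕ, kseq K n < j → j < kseq K (n + 1) →
      c (kseq K n) ≤ c j ∧ c j ≤ c (kseq K (n + 1)))
    (Ω : Type) [MeasurableSpace Ω] (μ : Measure Ω) [IsProbabilityMeasure μ]
    (E : Sym2 (HierGroup N) → Ω → Bool)
    (hprob : EdgeProbOK N 1 c μ E) :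
    μ {ω | ∃ n0 : ℕ, 1 ≤ n0 ∧ ∀ n : ℕ, n0 ≤ n → ∀ l : ℕ, 3 ≤ l →
        ∀ S S' : Set (HierGroup N),
          IsLargestCluster N (graphOf E ω) (kseq K n) S →
          IsLargestCluster N (graphOf E ω) (kseq K (n + l)) S' →
          ∀ x ∈ S ∩ (hball N (kseq K n) \ hball N (kseq K (n - 1))),
          ∀ y ∈ S' ∩ (hball N (kseq K (n + l)) \ hball N (kseq K (n + l - 1))),
            ¬ (graphOf E ω).Adj x y} = 1 := by
  have hlogN : 0 < Real.log N := Real.log_pos (by exact_mod_cast hN)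
  have hκ : 2 < K * Real.log N := by rwa [div_lt_iff₀ hlogN] at hK
  have hK0 : 0 < K := pos_of_mul_pos_left (by linarith) hlogN.le
  have hβκ : b * Real.log N < 2 * (K * Real.log N) - 1 := by
    have := mul_lt_mul_of_pos_right hb2 hlogN
    rwa [sub_mul, one_div_mul_cancel hlogN.ne', mul_assoc] at this
  obtain ⟨ε, hε, hp⟩ : ∃ ε > 0, b * Real.log N + ε - 2 * (K * Real.log N) < -1 :=
    ⟨(2 * (K * Real.log N) - 1 - b * Real.log N) / 2, by linarith, by linarith⟩
  have hβ : 0 ≤ b * Real.log N := by positivity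
  have hbound (n : ℕ) := measure_edgeEvent_hball_compl_le hN hK0 (by linarith) hC ha.le hε
    (by linarith) (by linarith) hck hmono hprob n
  have hsummable : Summable fun n : ℕ =>
      ((n : ℝ) + 1) ^ (b * Real.log N + ε - 2 * (K * Real.log N)) := by
    simpa using (summable_nat_add_iff 1).2 (Real.summable_nat_rpow.2 hp)
  have hsum :
      ∑' n, μ (edgeEvent E (hball N (kseq K n)) (hball N (kseq K (n + 2)))ᶜ) ≠ ∞ := by
    refine ne_top_of_le_ne_top ENNReal.ofReal_ne_top ((ENNReal.tsum_le_tsum hbound).trans_eq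
      (ENNReal.ofReal_tsum_of_nonneg (fun n => by positivity)
        ((hsummable.mul_left _).mul_left 2)).symm)
  refine (measure_congr (ae_eq_univ.2 ((ae_eventually_notMem hsum).mono fun ω hω => ?_))).trans
    measure_univ
  obtain ⟨n₀, hn₀⟩ := eventually_atTop.1 hω
  refine ⟨n₀ + 1, by omega, fun n hn l hl S S' _ _ x hx y hy hxy =>
    hn₀ n (by omega) ⟨x, hx.2.1, y, fun hy' => hy.2.2 ?_, hxy.2⟩⟩
  exact le_trans hy' (kseq_mono hK0.le (by omega))

/-- Critical case `δ = 1`, `k_n = ⌊K n log n⌋`, rates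
`c_{k_n} = C + a log n · N^{b log n}` with `2 / log N < K < b < 2K - 1/log N`:
almost surely there is `n₀` such that for all `n ≥ n₀`, edges between
`X_{k_n} ∩ (B_{k_n} \ B_{k_{n-1}})` and
`X_{k_{n+ℓ}} ∩ (B_{k_{n+ℓ}} \ B_{k_{n+ℓ-1}})` occur only for `ℓ = 1, 2`
(i.e. never for `ℓ ≥ 3`): the percolation cluster is a cascade of clusters at
the distances `k_n`. -/
theorem critical_cascade_of_clusters
    (N : ℕ) (hN : 2 ≤ N) (K b C a : ℝ)
    (hK : 2 / Real.log N < K) (hKb : K < b) (hb2 : b < 2 * K - 1 / Real.log N)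
    (hC : 0 ≤ C) (ha : 0 < a) (hb : 0 < b)
    (c : ℕ → ℝ)
    (hck : ∀ n : ℕ, 1 ≤ n →
      c (kseq K n) = C + a * Real.log n * (N : ℝ) ^ (b * Real.log n))
    (hmono : ∀ n : ℕ, 1 ≤ n → ∀ j : ℕ, kseq K n < j → j < kseq K (n + 1) →
      c (kseq K n) ≤ c j ∧ c j ≤ c (kseq K (n + 1)))
    (Ω : Type) [MeasurableSpace Ω] (μ : Measure Ω) [IsProbabilityMeasure μ]
    (E : Sym2 (HierGroup N) → Ω → Bool)
    (hE : ∀ e, Measurable (E e))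
    (hind : iIndepFun E μ)
    (hprob : EdgeProbOK N 1 c μ E) :
    μ {ω | ∃ n0 : ℕ, 1 ≤ n0 ∧ ∀ n : ℕ, n0 ≤ n → ∀ l : ℕ, 3 ≤ l →
        ∀ S S' : Set (HierGroup N),
          IsLargestCluster N (graphOf E ω) (kseq K n) S →
          IsLargestCluster N (graphOf E ω) (kseq K (n + l)) S' →
          ∀ x ∈ S ∩ (hball N (kseq K n) \ hball N (kseq K (n - 1))),
          ∀ y ∈ S' ∩ (hball N (kseq K (n + l)) \ hball N (kseq K (n + l - 1))),
            ¬ (graphOf E ω).Adj x y} = 1 :=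
  critical_cascade_of_clusters_general N hN K b C a hK hb2 hC ha hb c hck hmono Ω μ E hprob
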